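/- If L is a canonical n-lattice (levellised and <-minimal among all levellised n-lattices isomorphic to it as unlabelled lattices), then L', the lattice obtained from L by removing its deepest nonzero level, is also canonical. -/

import Mathlib

/-!
Let `D` be the depth of the deepest level of `L`. The labels `n', …, n-1` are exactly that level
and every other nonzero label is shallower, so the surviving nonzero labels form an up-set of `L`:
their depths and covering sets are the same in `L` and in `L'`. A relabelling `π'` of `L'`
extends by the identity on the deepest level to a relabelling `π` of `L`, which is again
levellised. The deepest level comes last in the level-major order, so a witness of
`π'(L') < L'` is a witness of `π(L) < L`, contradicting the canonicity of `L`.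
-/

namespace PaperLattice

variable {N : ℕ}

/-- Depth: one less than the maximum length of a chain from `t` down to `a` w.r.t. `le`. -/
noncomputable def dep (le : Fin N → Fin N → Prop) (t a : Fin N) : ℕ :=
  sSup {k | ∃ l : List (Fin N), List.Chain' (fun x y => le y x ∧ y ≠ x) l ∧
    l.head? = some t ∧ l.getLast? = some a ∧ l.length = k + 1}

/-- The `d`-th level: elements of depth `d`. -/
noncomputable def lev (le : Fin N → Fin N → Prop) (t : Fin N) (d : ℕ) : Set (Fin N) :=
  {a | dep le t a = d}

/-- A labelled poset is levellised if depth is monotone in the nonzero labels. -/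
def Levellised (le : Fin N → Fin N → Prop) (t : Fin N) : Prop :=
  ∀ i j : Fin N, 0 < (i : ℕ) → (i : ℕ) ≤ (j : ℕ) → dep le t i ≤ dep le t j

def lt' (le : Fin N → Fin N → Prop) (a b : Fin N) : Prop := le a b ∧ a ≠ b

/-- `b` covers `a`. -/
def CovByRel (le : Fin N → Fin N → Prop) (a b : Fin N) : Prop :=
  lt' le a b ∧ ∀ x, lt' le a x → lt' le x b → False

/-- The covering set of `a`. -/
def cov (le : Fin N → Fin N → Prop) (a : Fin N) : Set (Fin N) := {b | CovByRel le a b}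

/-- The up-set of `A`. -/
def upset (le : Fin N → Fin N → Prop) (A : Set (Fin N)) : Set (Fin N) :=
  {x | ∃ a ∈ A, le a x}

def AntichainRel (le : Fin N → Fin N → Prop) (A : Set (Fin N)) : Prop :=
  ∀ a ∈ A, ∀ b ∈ A, a ≠ b → ¬ le a b

/-- Binary weight of a set of labels. -/
noncomputable def wt (A : Set (Fin N)) : ℕ :=
  ∑ j : Fin N, A.indicator (fun j => 2 ^ (j : ℕ)) j

/-- `z` is a bottom and `o` a top for `le`. -/
def Bounds (le : Fin N → Fin N → Prop) (z o : Fin N) : Prop :=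
  (∀ a, le z a) ∧ (∀ a, le a o)

/-- The order obtained from `le` by adding `m` new atoms, the `i`-th having covering set `A i`. -/
def extLe {n m : ℕ} (le : Fin n → Fin n → Prop) (A : Fin m → Set (Fin n)) :
    Fin (n + m) → Fin (n + m) → Prop := fun x y =>
  if hx : (x : ℕ) < n then
    if hy : (y : ℕ) < n then le ⟨x, hx⟩ ⟨y, hy⟩
    else (x : ℕ) = 0
  else
    if hy : (y : ℕ) < n then
      (⟨y, hy⟩ : Fin n) ∈ upset le (A ⟨(x : ℕ) - n, by have := x.isLt; omega⟩)
    else x = y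

/-- The relabelled order `π(L)`. -/
def permLe {n : ℕ} (π : Equiv.Perm (Fin n)) (le : Fin n → Fin n → Prop) :
    Fin n → Fin n → Prop := fun a b => le (π.symm a) (π.symm b)


/-- The weight of the part of the covering set of `i` lying on level `d`. -/
noncomputable def covwt {N : ℕ} (le : Fin N → Fin N → Prop) (t : Fin N) (d : ℕ)
    (i : Fin N) : ℕ :=
  wt (cov le i ∩ lev le t d)

/-- The level-major order on levellised labelled lattices: `L₁ < L₂` iff at the first
position — blocks of elements ordered by increasing depth, within a block levels `d`
of the covering sets in decreasing order, within a level elements in increasing label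
order — the covering weight of `L₁` is smaller than that of `L₂`. -/
noncomputable def ltLM {N : ℕ} (L₁ L₂ : Lattice (Fin N)) (t : Fin N) : Prop :=
  ∃ (i : Fin N) (d : ℕ), 0 < (i : ℕ) ∧ 1 ≤ d ∧ d < dep L₁.le t i ∧
    covwt L₁.le t d i < covwt L₂.le t d i ∧
    ∀ (j : Fin N) (e : ℕ), 0 < (j : ℕ) → 1 ≤ e → e < dep L₁.le t j →
      (dep L₁.le t j < dep L₁.le t i ∨
        (dep L₁.le t j = dep L₁.le t i ∧ d < e) ∨
        (dep L₁.le t j = dep L₁.le t i ∧ e = d ∧ (j : ℕ) < (i : ℕ))) →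
      covwt L₁.le t e j = covwt L₂.le t e j

/-- `L` is canonical: a levellised `n`-lattice that is `<`-minimal (for the level-major
order) among all levellised `n`-lattices isomorphic to it as unlabelled lattices. -/
noncomputable def Canonical {N : ℕ} (L : Lattice (Fin N)) (z o : Fin N) : Prop :=
  Bounds L.le z o ∧ Levellised L.le o ∧
    ∀ M : Lattice (Fin N), Bounds M.le z o → Levellised M.le o →
      (∃ π : Equiv.Perm (Fin N), ∀ x y, M.le x y ↔ permLe π L.le x y) →
      ¬ ltLM M L o

def chainLengths (le : Fin N → Fin N → Prop) (t a : Fin N) : Set ℕ :=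
  {k | ∃ l : List (Fin N), List.IsChain (fun x y => le y x ∧ y ≠ x) l ∧
    l.head? = some t ∧ l.getLast? = some a ∧ l.length = k + 1}

lemma dep_eq_sSup (le : Fin N → Fin N → Prop) (t a : Fin N) :
    dep le t a = sSup (chainLengths le t a) := rfl

section Depth

variable (P : PartialOrder (Fin N))

lemma chainLengths_bddAbove (t a : Fin N) : BddAbove (chainLengths P.le t a) := by
  refine ⟨N, fun k ⟨l, hc, _, _, hlen⟩ => ?_⟩
  have : IsTrans (Fin N) (fun x y => P.le y x ∧ y ≠ x) :=
    ⟨fun x y z ⟨hyx, hne⟩ ⟨hzy, _⟩ =>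
      ⟨P.le_trans _ _ _ hzy hyx, fun hzx => hne (P.le_antisymm _ _ hyx (hzx ▸ hzy))⟩⟩
  have hnd : l.Nodup := (List.isChain_iff_pairwise.mp hc).imp fun h => h.2.symm
  exact (by simpa [hlen] using hnd.length_le_card : k < N).le

lemma chainLengths_nonempty {t : Fin N} (htop : ∀ x, P.le x t) (a : Fin N) :
    (chainLengths P.le t a).Nonempty := by
  by_cases h : a = t
  · exact ⟨0, [t], by simp, by simp, by simp [h], by simp⟩
  · exact ⟨1, [t, a], by simp [htop a, h], by simp, by simp, by simp⟩

lemma dep_mem_chainLengths {t : Fin N} (htop : ∀ x, P.le x t) (a : Fin N) :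
    dep P.le t a ∈ chainLengths P.le t a :=
  Nat.sSup_mem (chainLengths_nonempty P htop a) (chainLengths_bddAbove P t a)

lemma le_dep {t a : Fin N} {k : ℕ} (hk : k ∈ chainLengths P.le t a) : k ≤ dep P.le t a :=
  le_csSup (chainLengths_bddAbove P t a) hk

lemma dep_lt_of_le_of_ne {t : Fin N} (htop : ∀ x, P.le x t) {a b : Fin N} (hab : P.le a b)
    (hne : a ≠ b) : dep P.le t b < dep P.le t a := by
  obtain ⟨l, hc, hh, hl, hlen⟩ := dep_mem_chainLengths P htop b
  have hlne : l ≠ [] := by rintro rfl; simp at hh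
  suffices dep P.le t b + 1 ∈ chainLengths P.le t a from le_dep P this
  refine ⟨l ++ [a], ?_, by rwa [List.head?_append_of_ne_nil _ hlne], by simp, by simp [hlen]⟩
  refine List.isChain_append.mpr ⟨hc, by simp, fun x hx y hy => ?_⟩
  simp only [hl, Option.mem_def, Option.some.injEq, List.head?_cons] at hx hy
  exact hx ▸ hy ▸ ⟨hab, hne⟩

lemma le_of_mem_chain {l : List (Fin N)} {a : Fin N}
    (hc : List.IsChain (fun x y => P.le y x ∧ y ≠ x) l) (hl : l.getLast? = some a) :
    ∀ x ∈ l, P.le a x :=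
  hc.backwards_induction _ _ (fun _ _ hxy hy => P.le_trans _ _ _ hy hxy.1)
    fun hne => by
      rw [List.getLast?_eq_some_getLast hne, Option.some.injEq] at hl
      exact hl ▸ P.le_refl _

lemma mem_chainLengths_map {N₂ : ℕ} {le₂ : Fin N₂ → Fin N₂ → Prop} (f : Fin N → Fin N₂)
    {t a : Fin N} (hf : ∀ x y, P.le a y → P.le y x → y ≠ x → le₂ (f y) (f x) ∧ f y ≠ f x)
    {k : ℕ} (hk : k ∈ chainLengths P.le t a) : k ∈ chainLengths le₂ (f t) (f a) := by
  obtain ⟨l, hc, hh, hl, hlen⟩ := hk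
  refine ⟨l.map f, ?_, by simp [hh], by simp [hl], by simp [hlen]⟩
  have habove := le_of_mem_chain P hc hl
  clear hh hl hlen
  induction l with
  | nil => simp
  | cons y l ih =>
    cases l with
    | nil => simp
    | cons z l =>
      simp only [List.map_cons, List.isChain_cons_cons] at hc ⊢
      exact ⟨hf y z (habove z (by simp)) hc.1.1 hc.1.2,
        ih hc.2 fun x hx => habove x (List.mem_cons_of_mem _ hx)⟩

end Depth

lemma wt_image_castLE {n n' : ℕ} (h : n' ≤ n) (A : Set (Fin n')) :
    wt (Fin.castLE h '' A) = wt A := by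
  refine (Fintype.sum_of_injective _ (Fin.castLE_injective h) _ _ (fun x hx => ?_)
    (fun _ => (Set.indicator_image (Fin.castLE_injective h)).symm)).symm
  exact Set.indicator_of_notMem (by rintro ⟨y, -, hy⟩; exact hx ⟨y, hy⟩) _

section Relabel

variable {n : ℕ} (σ : Equiv.Perm (Fin n))

abbrev permLattice (L : Lattice (Fin n)) : Lattice (Fin n) := @Equiv.lattice _ _ σ.symm L

lemma permLattice_le_iff (L : Lattice (Fin n)) (a b : Fin n) :
    (permLattice σ L).le a b ↔ permLe σ L.le a b := Iff.rfl

lemma dep_permLe (P : PartialOrder (Fin n)) (t a : Fin n) :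
    dep (permLe σ P.le) t a = dep P.le (σ.symm t) (σ.symm a) := by
  rw [dep_eq_sSup, dep_eq_sSup]
  congr 1
  apply le_antisymm
  · intro k hk
    exact mem_chainLengths_map (@Equiv.partialOrder _ _ σ.symm P) σ.symm
      (fun _ _ _ hyx hne => ⟨hyx, σ.symm.injective.ne hne⟩) hk
  · intro k hk
    simpa using mem_chainLengths_map P σ (le₂ := permLe σ P.le)
      (fun _ _ _ hyx hne => ⟨by simpa [permLe] using hyx, σ.injective.ne hne⟩) hk

end Relabel

lemma Bounds.symm_apply_eq_of_permLe {P Q : PartialOrder (Fin N)} {π : Equiv.Perm (Fin N)}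
    {z o : Fin N} (hQ : Bounds Q.le z o) (hP : Bounds P.le z o)
    (hQP : ∀ x y, Q.le x y ↔ permLe π P.le x y) : π.symm z = z ∧ π.symm o = o := by
  constructor
  · refine P.le_antisymm _ _ ?_ (hP.1 _)
    simpa [permLe] using (hQP z (π z)).mp (hQ.1 _)
  · refine P.le_antisymm _ _ (hP.2 _) ?_
    simpa [permLe] using (hQP (π o) o).mp (hQ.2 _)

def IsDeepestLevelFrom (le : Fin N → Fin N → Prop) (t : Fin N) (n' D : ℕ) : Prop :=
  (∀ x : Fin N, n' ≤ (x : ℕ) → dep le t x = D) ∧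
    ∀ x : Fin N, 0 < (x : ℕ) → (x : ℕ) < n' → dep le t x < D

lemma Levellised.isDeepestLevelFrom {le : Fin N → Fin N → Prop} {t : Fin N}
    (hlev : Levellised le t) {n' : ℕ} (hN : 0 < N)
    (hcut : ∀ a : Fin N, (a : ℕ) < n' ↔ (a : ℕ) = 0 ∨ dep le t a < dep le t ⟨N - 1, by omega⟩) :
    IsDeepestLevelFrom le t n' (dep le t ⟨N - 1, by omega⟩) := by
  refine ⟨fun x hx => ?_, fun x hx0 hx => ((hcut x).mp hx).resolve_left hx0.ne'⟩
  have hx' : ¬ ((x : ℕ) = 0 ∨ _) := mt (hcut x).mpr (not_lt.mpr hx)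
  simp only [not_or, not_lt] at hx'
  exact le_antisymm (hlev _ _ (Nat.pos_of_ne_zero hx'.1) (Nat.le_sub_one_of_lt x.isLt)) hx'.2

namespace IsDeepestLevelFrom

variable {P : PartialOrder (Fin N)} {t : Fin N} {n' D : ℕ}

/-- Depth strictly decreases upwards, so the nonzero labels below `n'` form an up-set. -/
lemma val_lt_of_le (hcut : IsDeepestLevelFrom P.le t n' D) (htop : ∀ x, P.le x t)
    {a : Fin N} (ha : 0 < (a : ℕ)) (han : (a : ℕ) < n') (x : Fin N) (hax : P.le a x) :
    (x : ℕ) < n' := by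
  rcases eq_or_ne a x with rfl | hne
  · exact han
  by_contra hx
  have := dep_lt_of_le_of_ne P htop hax hne
  have := hcut.1 x (not_lt.mp hx)
  have := hcut.2 a ha han
  omega

lemma permLe (hcut : IsDeepestLevelFrom P.le t n' D) {σ : Equiv.Perm (Fin N)} (hN : 0 < N)
    (h0 : σ.symm ⟨0, hN⟩ = ⟨0, hN⟩) (ht : σ.symm t = t)
    (hfix : ∀ x : Fin N, n' ≤ (x : ℕ) → σ.symm x = x) :
    IsDeepestLevelFrom (permLe σ P.le) t n' D := by
  refine ⟨fun x hx => ?_, fun x hx0 hxn => ?_⟩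
  · rw [dep_permLe, ht, hfix x hx]
    exact hcut.1 x hx
  · rw [dep_permLe, ht]
    refine hcut.2 _ ?_ ?_
    · refine Nat.pos_of_ne_zero fun hz => ?_
      have : σ.symm x = σ.symm ⟨0, hN⟩ := by rw [h0]; exact Fin.ext hz
      exact hx0.ne' (congrArg Fin.val (σ.symm.injective this))
    · by_contra hge
      have := hfix _ (not_lt.mp hge)
      rw [σ.symm.injective this] at hge
      exact hge hxn

end IsDeepestLevelFrom

section Restrict

variable {n n' : ℕ} (h : n' ≤ n)

def toFinOrZero (h0 : 0 < n') (x : Fin n) : Fin n' :=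
  if hx : (x : ℕ) < n' then ⟨x, hx⟩ else ⟨0, h0⟩

lemma castLE_toFinOrZero (h0 : 0 < n') {x : Fin n} (hx : (x : ℕ) < n') :
    Fin.castLE h (toFinOrZero h0 x) = x := by
  simp [toFinOrZero, hx]

lemma toFinOrZero_castLE (h0 : 0 < n') (a : Fin n') : toFinOrZero h0 (Fin.castLE h a) = a := by
  simp [toFinOrZero]

lemma castLE_toFinOrZero_le (h0 : 0 < n') (P : PartialOrder (Fin n))
    (hbot : ∀ x, P.le ⟨0, by omega⟩ x) (x : Fin n) : P.le (Fin.castLE h (toFinOrZero h0 x)) x := by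
  unfold toFinOrZero
  split
  · exact P.le_refl _
  · exact hbot x

/-- Lattice structure on the surviving labels: joins are computed in `K`, and so are meets
unless the meet is a removed label, in which case it is replaced by `0`. -/
lemma exists_restriction (h0 : 0 < n') (K : Lattice (Fin n)) (hbot : ∀ x, K.le ⟨0, by omega⟩ x)
    (hsurv : ∀ a : Fin n', 0 < (a : ℕ) → ∀ x, K.le (Fin.castLE h a) x → (x : ℕ) < n') :
    ∃ M : Lattice (Fin n'),
      ∀ a b : Fin n', M.le a b ↔ K.le (Fin.castLE h a) (Fin.castLE h b) := by
  have hcast0 {a : Fin n'} (ha : (a : ℕ) = 0) : Fin.castLE h a = ⟨0, by omega⟩ := Fin.ext ha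
  have hsup (a b : Fin n') :
      Fin.castLE h (toFinOrZero h0 (K.sup (Fin.castLE h a) (Fin.castLE h b))) =
        K.sup (Fin.castLE h a) (Fin.castLE h b) := by
    refine castLE_toFinOrZero h h0 ?_
    rcases Nat.eq_zero_or_pos a with ha | ha
    · rw [K.le_antisymm _ _ (K.sup_le _ _ _ (hcast0 ha ▸ hbot _) (K.le_refl _))
        (K.le_sup_right _ _)]
      exact b.isLt
    · exact hsurv a ha _ (K.le_sup_left _ _)
  refine ⟨{ @PartialOrder.lift _ _ K.toPartialOrder (Fin.castLE h) (Fin.castLE_injective h) with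
    sup := fun a b => toFinOrZero h0 (K.sup (Fin.castLE h a) (Fin.castLE h b))
    le_sup_left := fun a b => by
      show K.le (Fin.castLE h _) (Fin.castLE h _)
      rw [hsup]
      exact K.le_sup_left _ _
    le_sup_right := fun a b => by
      show K.le (Fin.castLE h _) (Fin.castLE h _)
      rw [hsup]
      exact K.le_sup_right _ _
    sup_le := fun a b c hac hbc => by
      show K.le (Fin.castLE h _) (Fin.castLE h _)
      rw [hsup]
      exact K.sup_le _ _ _ hac hbc
    inf := fun a b => toFinOrZero h0 (K.inf (Fin.castLE h a) (Fin.castLE h b))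
    inf_le_left := fun a b =>
      K.le_trans _ _ _ (castLE_toFinOrZero_le h h0 K.toPartialOrder hbot _) (K.inf_le_left _ _)
    inf_le_right := fun a b =>
      K.le_trans _ _ _ (castLE_toFinOrZero_le h h0 K.toPartialOrder hbot _) (K.inf_le_right _ _)
    le_inf := fun c a b hca hcb => by
      show K.le (Fin.castLE h _) (Fin.castLE h _)
      have hci := K.le_inf _ _ _ hca hcb
      rcases Nat.eq_zero_or_pos c with hc | hc
      · rw [hcast0 hc]
        exact hbot _
      · rwa [castLE_toFinOrZero h h0 (hsurv c hc _ hci)] }, fun _ _ => Iff.rfl⟩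

section

variable (P : PartialOrder (Fin n)) (Q : PartialOrder (Fin n'))
  (hQP : ∀ a b : Fin n', Q.le a b ↔ P.le (Fin.castLE h a) (Fin.castLE h b))
include hQP

lemma dep_restrict (t' a : Fin n') (hsurv : ∀ x, P.le (Fin.castLE h a) x → (x : ℕ) < n') :
    dep Q.le t' a = dep P.le (Fin.castLE h t') (Fin.castLE h a) := by
  have h0 : 0 < n' := a.pos
  have hcast {x : Fin n} (hx : (x : ℕ) < n') := castLE_toFinOrZero h h0 hx
  rw [dep_eq_sSup, dep_eq_sSup]
  congr 1
  apply le_antisymm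
  · intro k hk
    exact mem_chainLengths_map Q (Fin.castLE h)
      (fun x y _ hyx hne => ⟨(hQP y x).mp hyx, (Fin.castLE_injective h).ne hne⟩) hk
  · intro k hk
    have hmono (x y : Fin n) (hay : P.le (Fin.castLE h a) y) (hyx : P.le y x) (hne : y ≠ x) :
        Q.le (toFinOrZero h0 y) (toFinOrZero h0 x) ∧ toFinOrZero h0 y ≠ toFinOrZero h0 x := by
      have hy := hcast (hsurv y hay)
      have hx := hcast (hsurv x (P.le_trans _ _ _ hay hyx))
      refine ⟨(hQP _ _).mpr (by rwa [hx, hy]), fun he => hne ?_⟩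
      rw [← hy, he, hx]
    simpa only [toFinOrZero_castLE] using mem_chainLengths_map P (toFinOrZero h0) hmono hk

lemma covByRel_castLE_iff {i b : Fin n'} (hsurv : ∀ x, P.le (Fin.castLE h i) x → (x : ℕ) < n') :
    CovByRel P.le (Fin.castLE h i) (Fin.castLE h b) ↔ CovByRel Q.le i b := by
  have hlt (a b : Fin n') : lt' P.le (Fin.castLE h a) (Fin.castLE h b) ↔ lt' Q.le a b :=
    and_congr (hQP a b).symm (Fin.castLE_injective h).ne_iff
  unfold CovByRel
  rw [hlt]
  refine and_congr_right fun _ =>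
    ⟨fun H x h1 h2 => H _ ((hlt _ _).mpr h1) ((hlt _ _).mpr h2), fun H x h1 h2 => ?_⟩
  have hx := castLE_toFinOrZero h i.pos (hsurv x h1.1)
  rw [← hx] at h1 h2
  exact H _ ((hlt _ _).mp h1) ((hlt _ _).mp h2)

lemma covwt_restrict (t' i : Fin n') (d : ℕ)
    (hsurv : ∀ x, P.le (Fin.castLE h i) x → (x : ℕ) < n') :
    covwt P.le (Fin.castLE h t') d (Fin.castLE h i) = covwt Q.le t' d i := by
  have hsurv' {b : Fin n'} (hib : P.le (Fin.castLE h i) (Fin.castLE h b)) :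
      ∀ x, P.le (Fin.castLE h b) x → (x : ℕ) < n' :=
    fun x hbx => hsurv x (P.le_trans _ _ _ hib hbx)
  rw [covwt, covwt, ← wt_image_castLE h]
  congr 1
  ext x
  constructor
  · rintro ⟨hcov, hlev⟩
    have hx := castLE_toFinOrZero h i.pos (hsurv x hcov.1.1)
    rw [← hx] at hcov hlev ⊢
    refine ⟨_, ⟨(covByRel_castLE_iff h P Q hQP hsurv).mp hcov, ?_⟩, rfl⟩
    rw [lev, Set.mem_ofPred_eq, dep_restrict h P Q hQP _ _ (hsurv' hcov.1.1)]
    exact hlev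
  · rintro ⟨b, ⟨hcov, hlev⟩, rfl⟩
    have hcov' := (covByRel_castLE_iff h P Q hQP hsurv).mpr hcov
    refine ⟨hcov', ?_⟩
    rw [lev, Set.mem_ofPred_eq, ← dep_restrict h P Q hQP _ _ (hsurv' hcov'.1.1)]
    exact hlev

lemma Levellised.restrict {t' : Fin n'} (hlev : Levellised P.le (Fin.castLE h t'))
    (hsurv : ∀ a : Fin n', 0 < (a : ℕ) → ∀ x, P.le (Fin.castLE h a) x → (x : ℕ) < n') :
    Levellised Q.le t' := by
  intro i j hi hij
  rw [dep_restrict h P Q hQP t' i (hsurv i hi), dep_restrict h P Q hQP t' j (hsurv j (by omega))]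
  exact hlev _ _ hi hij

lemma Levellised.of_restrict {t' : Fin n'} {D : ℕ}
    (hcut : IsDeepestLevelFrom P.le (Fin.castLE h t') n' D) (htop : ∀ x, P.le x (Fin.castLE h t'))
    (hlev : Levellised Q.le t') : Levellised P.le (Fin.castLE h t') := by
  intro i j hi hij
  by_cases hj : (j : ℕ) < n'
  · have hdep (a : Fin n') (ha : 0 < (a : ℕ)) :=
      dep_restrict h P Q hQP t' a (hcut.val_lt_of_le htop ha a.isLt)
    calc dep P.le _ i = dep Q.le t' ⟨i, by omega⟩ := (hdep ⟨i, by omega⟩ hi).symm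
      _ ≤ dep Q.le t' ⟨j, hj⟩ := hlev _ _ hi hij
      _ = dep P.le _ j := hdep ⟨j, hj⟩ (show 0 < (j : ℕ) by omega)
  · rw [hcut.1 j (not_lt.mp hj)]
    by_cases hi' : (i : ℕ) < n'
    · exact (hcut.2 i hi hi').le
    · exact (hcut.1 i (not_lt.mp hi')).le

end

lemma extendDomain_castLEquiv_castLE (π : Equiv.Perm (Fin n')) (a : Fin n') :
    π.extendDomain (Fin.castLEquiv h) (Fin.castLE h a) = Fin.castLE h (π a) := by
  simpa using π.extendDomain_apply_image (Fin.castLEquiv h) a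

lemma extendDomain_castLEquiv_of_le (π : Equiv.Perm (Fin n')) {x : Fin n} (hx : n' ≤ (x : ℕ)) :
    π.extendDomain (Fin.castLEquiv h) x = x :=
  π.extendDomain_apply_not_subtype _ (not_lt.mpr hx)

/-- The labels removed from `K₁` come last in the level-major order, so a witness of
`M₁ < M₂` is one of `K₁ < K₂`. -/
lemma ltLM_of_restrict {K₁ K₂ : Lattice (Fin n)} {M₁ M₂ : Lattice (Fin n')} {t' : Fin n'} {D : ℕ}
    (h₁ : ∀ a b : Fin n', M₁.le a b ↔ K₁.le (Fin.castLE h a) (Fin.castLE h b))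
    (h₂ : ∀ a b : Fin n', M₂.le a b ↔ K₂.le (Fin.castLE h a) (Fin.castLE h b))
    (hcut₁ : IsDeepestLevelFrom K₁.le (Fin.castLE h t') n' D)
    (hcut₂ : IsDeepestLevelFrom K₂.le (Fin.castLE h t') n' D)
    (htop₁ : ∀ x, K₁.le x (Fin.castLE h t')) (htop₂ : ∀ x, K₂.le x (Fin.castLE h t'))
    (hlt : ltLM M₁ M₂ t') : ltLM K₁ K₂ (Fin.castLE h t') := by
  have hdep (a : Fin n') (ha : 0 < (a : ℕ)) :
      dep M₁.le t' a = dep K₁.le (Fin.castLE h t') (Fin.castLE h a) :=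
    dep_restrict h K₁.toPartialOrder M₁.toPartialOrder h₁ t' a
      (hcut₁.val_lt_of_le htop₁ ha a.isLt)
  have hcovwt (a : Fin n') (ha : 0 < (a : ℕ)) (d : ℕ) :
      covwt K₁.le (Fin.castLE h t') d (Fin.castLE h a) = covwt M₁.le t' d a ∧
        covwt K₂.le (Fin.castLE h t') d (Fin.castLE h a) = covwt M₂.le t' d a :=
    ⟨covwt_restrict h K₁.toPartialOrder M₁.toPartialOrder h₁ t' a d
      (hcut₁.val_lt_of_le htop₁ ha a.isLt),
     covwt_restrict h K₂.toPartialOrder M₂.toPartialOrder h₂ t' a d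
      (hcut₂.val_lt_of_le htop₂ ha a.isLt)⟩
  obtain ⟨i, d, hi, hd, hdi, hcwi, hprev⟩ := hlt
  refine ⟨Fin.castLE h i, d, hi, hd, hdep i hi ▸ hdi, ?_, fun j e hj he hej hpos => ?_⟩
  · rwa [(hcovwt i hi d).1, (hcovwt i hi d).2]
  by_cases hjn : (j : ℕ) < n'
  · have := hprev ⟨j, hjn⟩ e hj he (by rwa [hdep _ hj]) (by rwa [hdep _ hj, hdep i hi])
    rwa [← (hcovwt ⟨j, hjn⟩ hj e).1, ← (hcovwt ⟨j, hjn⟩ hj e).2] at this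
  · have hjD := hcut₁.1 j (not_lt.mp hjn)
    have hiD := hcut₁.2 (Fin.castLE h i) hi i.isLt
    omega

lemma Canonical.restrict (h0 : 0 < n') {L : Lattice (Fin n)} {M : Lattice (Fin n')}
    {o : Fin n'} {D : ℕ} (hL : Canonical L ⟨0, by omega⟩ (Fin.castLE h o))
    (hcut : IsDeepestLevelFrom L.le (Fin.castLE h o) n' D)
    (hML : ∀ a b : Fin n', M.le a b ↔ L.le (Fin.castLE h a) (Fin.castLE h b)) :
    Canonical M ⟨0, h0⟩ o := by
  obtain ⟨⟨hbot, htop⟩, hlev, hmin⟩ := hL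
  have hbM : Bounds M.le ⟨0, h0⟩ o :=
    ⟨fun _ => (hML _ _).mpr (hbot _), fun _ => (hML _ _).mpr (htop _)⟩
  refine ⟨hbM, hlev.restrict h L.toPartialOrder M.toPartialOrder hML
    (fun a ha => hcut.val_lt_of_le htop ha a.isLt), ?_⟩
  rintro M' hbM' hlevM' ⟨π, hπ⟩ hlt
  obtain ⟨hπ0, hπo⟩ := hbM'.symm_apply_eq_of_permLe hbM hπ
  set σ := π.extendDomain (Fin.castLEquiv h)
  have hσ (a : Fin n') : σ.symm (Fin.castLE h a) = Fin.castLE h (π.symm a) :=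
    extendDomain_castLEquiv_castLE h π.symm a
  have hσo : σ.symm (Fin.castLE h o) = Fin.castLE h o := by rw [hσ, hπo]
  have hσ0 : σ.symm ⟨0, by omega⟩ = ⟨0, by omega⟩ := (hσ ⟨0, h0⟩).trans (by rw [hπ0]; rfl)
  have hM'L (a b : Fin n') :
      M'.le a b ↔ (permLattice σ L).le (Fin.castLE h a) (Fin.castLE h b) := by
    rw [hπ, permLattice_le_iff, permLe, permLe, hσ, hσ, ← hML]
  have htop' (x : Fin n) : (permLattice σ L).le x (Fin.castLE h o) := by
    rw [permLattice_le_iff, permLe, hσo]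
    exact htop _
  have hcut' : IsDeepestLevelFrom (permLattice σ L).le (Fin.castLE h o) n' D :=
    hcut.permLe (by omega) hσ0 hσo
      (fun x hx => extendDomain_castLEquiv_of_le h π.symm hx)
  have hbot' (x : Fin n) : (permLattice σ L).le ⟨0, by omega⟩ x := by
    rw [permLattice_le_iff, permLe, hσ0]
    exact hbot _
  have hlev' : Levellised (permLattice σ L).le (Fin.castLE h o) :=
    Levellised.of_restrict h (permLattice σ L).toPartialOrder _ hM'L hcut' htop' hlevM'
  exact hmin (permLattice σ L) ⟨hbot', htop'⟩ hlev' ⟨σ, fun _ _ => Iff.rfl⟩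
    (ltLM_of_restrict h hM'L hML hcut' hcut htop' htop hlt)

end Restrict

/-- removing the deepest nonzero level (the labels `n', …, n-1`, keeping the
bottom `0`) of a canonical `n`-lattice yields a canonical `n'`-lattice. -/
theorem statement18 {n n' : ℕ} (hn' : 2 ≤ n') (hlt : n' < n)
    (L : Lattice (Fin n))
    (hcanon : Canonical L ⟨0, by omega⟩ ⟨1, by omega⟩)
    (hcut : ∀ a : Fin n, ((a : ℕ) < n' ↔ ((a : ℕ) = 0 ∨
      dep L.le ⟨1, by omega⟩ a < dep L.le ⟨1, by omega⟩ ⟨n - 1, by omega⟩))) :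
    ∃ M : Lattice (Fin n'),
      (∀ a b : Fin n',
        M.le a b ↔ L.le (Fin.castLE (le_of_lt hlt) a) (Fin.castLE (le_of_lt hlt) b)) ∧
      Canonical M ⟨0, by omega⟩ ⟨1, by omega⟩ := by
  have hdeep := hcanon.2.1.isDeepestLevelFrom (by omega) hcut
  obtain ⟨M, hM⟩ := exists_restriction hlt.le (by omega) L hcanon.1.1
    (fun a ha => hdeep.val_lt_of_le hcanon.1.2 ha a.isLt)
  exact ⟨M, hM, Canonical.restrict hlt.le (by omega) (o := ⟨1, by omega⟩) hcanon hdeep hM⟩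

end PaperLattice
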